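/- arXiv:2208.09067 — 2 statements merged into one kernel-verified Lean document; each statement's English description precedes it below -/
import Mathlib

section
/- For every binary vector y : M → ℝ, one has 𝕃(y) ≥ RHS(𝕃(yη), L, y). In other words, the slim integer L-shaped cut θ ≥ RHS(𝕃(yη), L, y) generated at yη is valid: for every binary y (in particular for the optimal first-stage decision y*), the point (y, 𝕃(y)) satisfies the cut, so the cut never excludes the optimal solution (y*, 𝕃(y*)). -/
open Finset

/-- A vector `y : M → ℝ` is binary if every entry is 0 or 1. -/
def IsBinary {M : Type*} (y : M → ℝ) : Prop := ∀ m, y m = 0 ∨ y m = 1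

/-- The right-hand side of the slim integer L-shaped cut generated at `yη`,
with recourse estimate `ℓ` and lower bound `L`, evaluated at `y`. -/
noncomputable def cutRHS {M : Type*} [Fintype M] (yη : M → ℝ) (ℓ L : ℝ) (y : M → ℝ) : ℝ :=
  (ℓ - L) * ((∑ m ∈ Finset.univ.filter (fun m => yη m = 1), y m) -
      ∑ m ∈ Finset.univ.filter (fun m => ¬ yη m = 1), y m)
    - (ℓ - L) * (((Finset.univ.filter (fun m => yη m = 1)).card : ℝ) - 1) + L

/-!
The cut is linear in `y`, and on binary vectors its bracket `∑_{S} y - ∑_{∉ S} y` equals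
`|S| - d(y, yη)`, where `d` is the Hamming distance. Hence the cut reads
`θ ≥ (𝕃 yη - L) (1 - d(y, yη)) + L`: at `y = yη` it is the equality `θ ≥ 𝕃 yη`, and for
`y ≠ yη` we have `d ≥ 1`, so the right-hand side is at most the lower bound `L ≤ 𝕃 y`.
-/

section

variable {M : Type*} [Fintype M] {yη y : M → ℝ}

theorem IsBinary.hammingDist_eq_sum (hyη : IsBinary yη) (hy : IsBinary y) :
    (hammingDist y yη : ℝ) =
      ∑ m ∈ univ.filter (fun m => yη m = 1), (1 - y m) +
        ∑ m ∈ univ.filter (fun m => ¬ yη m = 1), y m := by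
  rw [hammingDist, card_filter, Nat.cast_sum,
    ← sum_filter_add_sum_filter_not univ (fun m => yη m = 1)]
  congr 1 <;> refine sum_congr rfl fun m hm => ?_ <;> rw [mem_filter] at hm <;>
    rcases hy m with h | h <;> rcases hyη m with h' | h' <;> simp_all

theorem IsBinary.sum_filter_sub_sum_filter_not (hyη : IsBinary yη) (hy : IsBinary y) :
    ∑ m ∈ univ.filter (fun m => yη m = 1), y m -
        ∑ m ∈ univ.filter (fun m => ¬ yη m = 1), y m =
      #(univ.filter (fun m => yη m = 1)) - hammingDist y yη := by
  rw [hyη.hammingDist_eq_sum hy, sum_sub_distrib, sum_const, nsmul_one]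
  ring

theorem IsBinary.cutRHS_eq (hyη : IsBinary yη) (hy : IsBinary y) (ℓ L : ℝ) :
    cutRHS yη ℓ L y = (ℓ - L) * (1 - hammingDist y yη) + L := by
  rw [cutRHS, hyη.sum_filter_sub_sum_filter_not hy]
  ring

end

/-- Validity of the slim integer L-shaped cut: for every binary `y`,
`𝕃 y ≥ RHS(𝕃 yη, L, y)`, so in particular the cut generated at `yη` never
excludes the optimal solution `(y*, 𝕃 y*)`. -/
theorem slim_cut_valid {M : Type*} [Fintype M]
    (yη : M → ℝ) (hyη : IsBinary yη)
    (𝕃 : (M → ℝ) → ℝ) (L : ℝ)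
    (hL : ∀ y : M → ℝ, IsBinary y → L ≤ 𝕃 y)
    (y : M → ℝ) (hy : IsBinary y) :
    𝕃 y ≥ cutRHS yη (𝕃 yη) L y := by
  rw [hyη.cutRHS_eq hy]
  by_cases hyy : y = yη
  · simp [hyy]
  · have hdist : (1 : ℝ) ≤ hammingDist y yη := by exact_mod_cast hammingDist_pos.mpr hyy
    have hgap : 0 ≤ 𝕃 yη - L := sub_nonneg.mpr (hL yη hyη)
    calc (𝕃 yη - L) * (1 - hammingDist y yη) + L ≤ L :=
          add_le_of_nonpos_left (mul_nonpos_of_nonneg_of_nonpos hgap (by linarith))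
      _ ≤ 𝕃 y := hL y hy
end

section
/- Let a and b be real numbers with b ≤ a (the greedy-heuristic and augmented-heuristic recourse estimates at yη, satisfying 𝕃aug(yη) = b ≤ a = 𝕃gred(yη)). Then for every binary vector y : M → ℝ with y ≠ yη, the greedy cut right-hand side is dominated by the augmented cut right-hand side: RHS(a, L, y) ≤ RHS(b, L, y). Consequently, every pair (y, θ) with y binary, y ≠ yη, satisfying the augmented cut θ ≥ RHS(b, L, y) also satisfies the greedy cut θ ≥ RHS(a, L, y); adding the greedy cut first cannot exclude any such solution that the augmented cut would retain. -/
/-!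
At binary `y` the cut right-hand side is `L + (ℓ - L) * (1 - d(y, yη))`, where `d` is the
Hamming distance `∑ m, |y m - yη m|`. For `y ≠ yη` this distance is at least `1`, so the
right-hand side is antitone in the recourse estimate `ℓ`, and the smaller estimate `b` gives
the larger right-hand side.
-/

open Finset

namespace IsBinary

variable {M : Type*} {x y : M → ℝ}

lemma abs_sub_eq_one (hx : IsBinary x) (hy : IsBinary y) {m : M} (h : x m ≠ y m) :
    |x m - y m| = 1 := by
  rcases hx m with hx0 | hx1 <;> rcases hy m with hy0 | hy1 <;> simp_all

lemma one_le_sum_abs_sub [Fintype M] (hx : IsBinary x) (hy : IsBinary y) (hne : x ≠ y) :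
    1 ≤ ∑ m, |x m - y m| := by
  obtain ⟨m, hm⟩ := Function.ne_iff.mp hne
  calc (1 : ℝ) = |x m - y m| := (hx.abs_sub_eq_one hy hm).symm
    _ ≤ ∑ m, |x m - y m| :=
      single_le_sum (f := fun m => |x m - y m|) (fun _ _ => abs_nonneg _) (mem_univ m)

end IsBinary

lemma sum_filter_sub_sum_filter_not_eq_card_sub_sum_abs_sub {M : Type*} [Fintype M]
    {yη y : M → ℝ} (hyη : IsBinary yη) (hy : IsBinary y) :
    (∑ m ∈ univ.filter (fun m => yη m = 1), y m) - ∑ m ∈ univ.filter (fun m => ¬ yη m = 1), y m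
      = #(univ.filter (fun m => yη m = 1)) - ∑ m, |y m - yη m| := by
  have hS : ∑ m ∈ univ.filter (fun m => yη m = 1), |y m - yη m|
      = ∑ m ∈ univ.filter (fun m => yη m = 1), (1 - y m) := by
    refine sum_congr rfl fun m hm => ?_
    rw [(mem_filter.mp hm).2]
    rcases hy m with h | h <;> simp [h]
  have hT : ∑ m ∈ univ.filter (fun m => ¬ yη m = 1), |y m - yη m|
      = ∑ m ∈ univ.filter (fun m => ¬ yη m = 1), y m := by
    refine sum_congr rfl fun m hm => ?_
    rw [(hyη m).resolve_right (mem_filter.mp hm).2]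
    rcases hy m with h | h <;> simp [h]
  rw [← sum_filter_add_sum_filter_not univ (fun m => yη m = 1), hS, hT, sum_sub_distrib,
    sum_const, nsmul_one]
  ring

lemma cutRHS_eq_add_mul_one_sub_sum_abs_sub {M : Type*} [Fintype M] {yη y : M → ℝ}
    (hyη : IsBinary yη) (hy : IsBinary y) (ℓ L : ℝ) :
    cutRHS yη ℓ L y = L + (ℓ - L) * (1 - ∑ m, |y m - yη m|) := by
  rw [cutRHS, sum_filter_sub_sum_filter_not_eq_card_sub_sum_abs_sub hyη hy]
  ring

/-- With `b ≤ a` (augmented vs greedy recourse estimates at `yη`), at every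
binary `y ≠ yη` the greedy cut right-hand side is dominated by the augmented
one; hence any pair `(y, θ)` satisfying the augmented cut also satisfies the
greedy cut, so adding the greedy cut first cannot exclude such solutions. -/
theorem greedy_cut_dominated_by_augmented {M : Type*} [Fintype M]
    (yη : M → ℝ) (hyη : IsBinary yη) (a b L : ℝ) (hba : b ≤ a)
    (y : M → ℝ) (hy : IsBinary y) (hne : y ≠ yη) :
    cutRHS yη a L y ≤ cutRHS yη b L y ∧
      ∀ θ : ℝ, θ ≥ cutRHS yη b L y → θ ≥ cutRHS yη a L y := by
  have hdist : 1 ≤ ∑ m, |y m - yη m| := hy.one_le_sum_abs_sub hyη hne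
  have hle : cutRHS yη a L y ≤ cutRHS yη b L y := by
    simp only [cutRHS_eq_add_mul_one_sub_sum_abs_sub hyη hy]
    have := mul_le_mul_of_nonpos_right (sub_le_sub_right hba L) (sub_nonpos.mpr hdist)
    linarith
  exact ⟨hle, fun θ hθ => hle.trans hθ⟩
end
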